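/- Suppose the value function g has curvature at most α for some α ∈ [0,1]. Then for every item i ∈ {1,…,n}, the replication test score satisfies r_i ≥ (1−α)·k_i·E[g({X_i})], where E[g({X_i})] is the expected value of g applied to the singleton multiset containing the value of item i. -/

import Mathlib

open MeasureTheory ProbabilityTheory Finset

/-- Monotonicity of a value function on multisets of nonnegative reals. -/
def ValMonotone (g : Multiset NNReal → ℝ) : Prop :=
  ∀ ⦃s t : Multiset NNReal⦄, s ≤ t → g s ≤ g t

/-- The diminishing returns property of a value function. -/
def DiminishingReturns (g : Multiset NNReal → ℝ) : Prop :=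
  ∀ ⦃s t : Multiset NNReal⦄, s ≤ t → ∀ z : NNReal, g (z ::ₘ t) - g t ≤ g (z ::ₘ s) - g s

/-- The extended diminishing returns property of a value function. -/
def ExtendedDiminishingReturns (g : Multiset NNReal → ℝ) : Prop :=
  DiminishingReturns g ∧
    ∀ v : ℝ, (∃ s : Multiset NNReal, g s = v) →
      ∃ y : Multiset NNReal, g y = v ∧
        ∀ x : Multiset NNReal, g x ≤ v → ∀ z : NNReal, g (z ::ₘ y) - g y ≤ g (z ::ₘ x) - g x

/-- Continuity of a value function on multisets of each fixed size. -/
def ValContinuous (g : Multiset NNReal → ℝ) : Prop :=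
  ∀ m : ℕ, Continuous fun x : Fin m → NNReal => g (List.ofFn x)

/-- The value function `g` has curvature at most `α`. -/
def CurvatureLE (g : Multiset NNReal → ℝ) (α : ℝ) : Prop :=
  ∀ ⦃s t : Multiset NNReal⦄, s ≤ t → ∀ z : NNReal,
    (1 - α) * (g (z ::ₘ s) - g s) ≤ g (z ::ₘ t) - g t

/-- The stochastic utility of a set of items: `u(S) = E[g({X_i : i ∈ S})]`. -/
noncomputable def utility {Ω : Type} [MeasurableSpace Ω] (μ : Measure Ω) {n : ℕ}
    (g : Multiset NNReal → ℝ) (X : Fin n → Ω → NNReal) (S : Finset (Fin n)) : ℝ :=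
  ∫ ω, g (Multiset.map (fun i => X i ω) S.val) ∂μ

/-- The replication test score of item `i`: expected value of `g` on `k i` i.i.d. copies. -/
noncomputable def testScore {n : ℕ} (g : Multiset NNReal → ℝ)
    (P : Fin n → Measure NNReal) (k : Fin n → ℕ) (i : Fin n) : ℝ :=
  ∫ x : Fin (k i) → NNReal, g (List.ofFn x) ∂(Measure.pi fun _ => P i)

/-- The relative cost `d(S) = ∑_{i ∈ S} 1 / k_i`. -/
noncomputable def relCost {n : ℕ} (k : Fin n → ℕ) (S : Finset (Fin n)) : ℝ :=
  ∑ i ∈ S, ((k i : ℝ))⁻¹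

open scoped ENNReal

/-!
Telescoping the curvature inequality along a multiset, starting from the empty one, gives
`(1 - α) * ∑ z ∈ t, g {z} ≤ g t` pointwise. Evaluated at `k i` i.i.d. copies of `X i`
and integrated, this is the claim, since each copy contributes `E[g {X i}]`.

The only subtlety is measurability: nothing makes `y ↦ g {y}` measurable, so the
expectation of the sum cannot be split coordinatewise directly. We work instead with the
upper Lebesgue integral, which is superadditive on product measures by Tonelli.
-/

noncomputable def upperLIntegral {α : Type*} [MeasurableSpace α] (μ : Measure α)
    (f : α → ℝ≥0∞) : ℝ≥0∞ :=
  ⨅ (φ : α → ℝ≥0∞) (_ : Measurable φ) (_ : f ≤ᵐ[μ] φ), ∫⁻ x, φ x ∂μ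

section UpperLIntegral

variable {α β : Type*} [MeasurableSpace α] [MeasurableSpace β]

theorem upperLIntegral_le_lintegral {μ : Measure α} {f φ : α → ℝ≥0∞}
    (hφ : AEMeasurable φ μ) (h : f ≤ᵐ[μ] φ) : upperLIntegral μ f ≤ ∫⁻ x, φ x ∂μ := by
  rw [lintegral_congr_ae hφ.ae_eq_mk]
  exact iInf₂_le_of_le _ hφ.measurable_mk <| iInf_le_of_le (h.trans hφ.ae_eq_mk.le) le_rfl

theorem lintegral_comp_le_upperLIntegral_map {μ : Measure α} {X : α → β}
    (hX : AEMeasurable X μ) (f : β → ℝ≥0∞) :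
    ∫⁻ x, f (X x) ∂μ ≤ upperLIntegral (μ.map X) f := by
  refine le_iInf₂ fun φ hφ => le_iInf fun hfφ => ?_
  rw [lintegral_map' hφ.aemeasurable hX]
  exact lintegral_mono_ae (ae_of_ae_map hX hfφ)

theorem upperLIntegral_le_of_measurePreserving {μ : Measure α} {ν : Measure β} (e : α ≃ᵐ β)
    (he : MeasurePreserving e μ ν) (f : β → ℝ≥0∞) :
    upperLIntegral ν f ≤ upperLIntegral μ (f ∘ e) := by
  refine le_iInf₂ fun φ hφ => le_iInf fun hfφ => ?_
  have hae : f ≤ᵐ[ν] φ ∘ e.symm := by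
    rw [← he.map_eq]
    exact e.measurableEmbedding.ae_map_iff.mpr (by simpa [Filter.EventuallyLE] using hfφ)
  calc upperLIntegral ν f ≤ ∫⁻ y, φ (e.symm y) ∂ν :=
        upperLIntegral_le_lintegral (hφ.comp e.symm.measurable).aemeasurable hae
    _ = ∫⁻ x, φ x ∂μ := by simp [he.lintegral_map_equiv]

theorem const_add_upperLIntegral_le {μ : Measure α} [IsProbabilityMeasure μ] {f Φ : α → ℝ≥0∞}
    {c : ℝ≥0∞} (hΦ : AEMeasurable Φ μ) (h : ∀ᵐ x ∂μ, c + f x ≤ Φ x) :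
    c + upperLIntegral μ f ≤ ∫⁻ x, Φ x ∂μ := by
  have hcΦ : ∀ᵐ x ∂μ, c ≤ Φ x := h.mono fun x hx => le_self_add.trans hx
  by_cases hc : c = ∞
  · have : ∀ᵐ x ∂μ, Φ x = ∞ := hcΦ.mono fun x hx => top_le_iff.mp (hc ▸ hx)
    simp [lintegral_congr_ae this, hc]
  have hf : f ≤ᵐ[μ] fun x => Φ x - c :=
    h.mono fun x hx => ENNReal.le_sub_of_add_le_left hc hx
  calc c + upperLIntegral μ f ≤ c + ∫⁻ x, Φ x - c ∂μ := by
        gcongr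
        exact upperLIntegral_le_lintegral (hΦ.sub aemeasurable_const) hf
    _ = ∫⁻ x, c + (Φ x - c) ∂μ := by simp [lintegral_add_left measurable_const]
    _ = ∫⁻ x, Φ x ∂μ := lintegral_congr_ae (hcΦ.mono fun x hx => add_tsub_cancel_of_le hx)

theorem upperLIntegral_add_le_prod {μ : Measure α} {ν : Measure β} [IsProbabilityMeasure μ]
    [IsProbabilityMeasure ν] (f : α → ℝ≥0∞) (g : β → ℝ≥0∞) :
    upperLIntegral μ f + upperLIntegral ν g ≤
      upperLIntegral (μ.prod ν) fun z => f z.1 + g z.2 := by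
  refine le_iInf₂ fun φ hφ => le_iInf fun hfgφ => ?_
  have hsection : ∀ᵐ x ∂μ, f x + upperLIntegral ν g ≤ ∫⁻ y, φ (x, y) ∂ν :=
    (Measure.ae_ae_of_ae_prod hfgφ).mono fun x hx =>
      const_add_upperLIntegral_le (hφ.comp measurable_prodMk_left).aemeasurable hx
  rw [add_comm, lintegral_prod _ hφ.aemeasurable]
  exact const_add_upperLIntegral_le hφ.lintegral_prod_right'.aemeasurable
    (hsection.mono fun x hx => by rwa [add_comm])

theorem natCast_mul_upperLIntegral_le_pi (μ : Measure α) [IsProbabilityMeasure μ]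
    (f : α → ℝ≥0∞) (m : ℕ) :
    m * upperLIntegral μ f ≤
      upperLIntegral (Measure.pi fun _ : Fin m => μ) fun x => ∑ j, f (x j) := by
  induction m with
  | zero => simp
  | succ m ih =>
    let e := MeasurableEquiv.piFinSuccAbove (fun _ : Fin (m + 1) => α) 0
    have he := measurePreserving_piFinSuccAbove (fun _ : Fin (m + 1) => μ) 0
    calc ((m + 1 : ℕ) : ℝ≥0∞) * upperLIntegral μ f
        ≤ upperLIntegral μ f + upperLIntegral (Measure.pi fun _ : Fin m => μ)
            (fun x => ∑ j, f (x j)) := by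
          push_cast
          rw [add_mul, one_mul, add_comm]
          gcongr
      _ ≤ upperLIntegral (μ.prod (Measure.pi fun _ : Fin m => μ))
            (fun z => f z.1 + ∑ j, f (z.2 j)) := upperLIntegral_add_le_prod _ _
      _ ≤ _ := by
          refine (upperLIntegral_le_of_measurePreserving e he _).trans_eq ?_
          congr 1
          ext x
          simp [e, Fin.sum_univ_succ, Fin.tail]

end UpperLIntegral

theorem CurvatureLE.mul_sum_map_singleton_le {g : Multiset NNReal → ℝ} {α : ℝ}
    (hg : CurvatureLE g α) (hg0 : g 0 = 0) (t : Multiset NNReal) :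
    (1 - α) * (t.map fun z => g {z}).sum ≤ g t := by
  induction t using Multiset.induction with
  | empty => simp [hg0]
  | cons z t ih =>
    have h := hg (Multiset.zero_le t) z
    rw [hg0, sub_zero] at h
    rw [Multiset.map_cons, Multiset.sum_cons, mul_add]
    exact (add_le_add h ih).trans_eq (by ring)

theorem stmt19_general {Ω : Type} [MeasurableSpace Ω] (μ : Measure Ω)
    {n : ℕ}
    (k : Fin n → ℕ)
    (X : Fin n → Ω → NNReal) (hXmeas : ∀ i, Measurable (X i))
    (P : Fin n → Measure NNReal) [∀ i, IsProbabilityMeasure (P i)]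
    (hlaw : ∀ i, μ.map (X i) = P i)
    (g : Multiset NNReal → ℝ) (hg0 : g 0 = 0) (hgnn : ∀ s, 0 ≤ g s)
    (α : ℝ) (hα1 : α ≤ 1) (hcurv : CurvatureLE g α)
    (hIntu : ∀ S : Finset (Fin n),
      Integrable (fun ω => g (Multiset.map (fun i => X i ω) S.val)) μ)
    (hIntr : ∀ i, Integrable (fun x : Fin (k i) → NNReal => g (List.ofFn x))
      (Measure.pi fun _ => P i)) :
    ∀ i : Fin n,
      (1 - α) * (k i : ℝ) * (∫ ω, g {X i ω} ∂μ) ≤ testScore g P k i := by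
  intro i
  have hG_nonneg : ∀ y, 0 ≤ (1 - α) * g {y} := fun y => mul_nonneg (sub_nonneg.2 hα1) (hgnn _)
  set G : NNReal → ℝ≥0∞ := fun y => ENNReal.ofReal ((1 - α) * g {y})
  have hsum_le : ∀ x : Fin (k i) → NNReal, ∑ j, G (x j) ≤ ENNReal.ofReal (g (List.ofFn x)) := by
    intro x
    rw [← ENNReal.ofReal_sum_of_nonneg fun j _ => hG_nonneg _, ← Finset.mul_sum]
    refine ENNReal.ofReal_le_ofReal ?_
    simpa [List.sum_ofFn] using hcurv.mul_sum_map_singleton_le hg0 (List.ofFn x)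
  have hlower : (k i : ℝ≥0∞) * ∫⁻ ω, G (X i ω) ∂μ ≤
      ∫⁻ x, ENNReal.ofReal (g (List.ofFn x)) ∂(Measure.pi fun _ => P i) :=
    calc _ ≤ k i * upperLIntegral (P i) G := by
          gcongr
          rw [← hlaw i]
          exact lintegral_comp_le_upperLIntegral_map (hXmeas i).aemeasurable G
      _ ≤ upperLIntegral (Measure.pi fun _ => P i) (fun x => ∑ j, G (x j)) :=
          natCast_mul_upperLIntegral_le_pi _ _ _
      _ ≤ _ := upperLIntegral_le_lintegral (hIntr i).aemeasurable.ennreal_ofReal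
          (Filter.Eventually.of_forall hsum_le)
  have hsingle : Integrable (fun ω => (1 - α) * g {X i ω}) μ := by
    simpa using (hIntu {i}).const_mul (1 - α)
  rw [testScore, ← ENNReal.ofReal_le_ofReal_iff (integral_nonneg fun _ => hgnn _),
    ofReal_integral_eq_lintegral_ofReal (hIntr i) (Filter.Eventually.of_forall fun _ => hgnn _),
    mul_comm (1 - α), mul_assoc, ← integral_const_mul, ENNReal.ofReal_mul (Nat.cast_nonneg _),
    ofReal_integral_eq_lintegral_ofReal hsingle (Filter.Eventually.of_forall fun _ => hG_nonneg _)]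
  simpa using hlower

/-- if `g` has curvature at most `α`, then the replication test score
satisfies `r_i ≥ (1−α)·k_i·E[g({X_i})]`. -/
theorem stmt19 {Ω : Type} [MeasurableSpace Ω] (μ : Measure Ω) [IsProbabilityMeasure μ]
    {n : ℕ} (hn : 1 ≤ n)
    (c : Fin n → ℝ) (B : ℝ) (hB : 0 < B) (hc : ∀ i, 0 < c i) (hcB : ∀ i, c i ≤ B)
    (k : Fin n → ℕ) (hk : ∀ i, k i = ⌊B / c i⌋₊)
    (X : Fin n → Ω → NNReal) (hXmeas : ∀ i, Measurable (X i))
    (P : Fin n → Measure NNReal) [∀ i, IsProbabilityMeasure (P i)]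
    (hlaw : ∀ i, μ.map (X i) = P i)
    (hindep : iIndepFun X μ)
    (g : Multiset NNReal → ℝ) (hg0 : g 0 = 0) (hgnn : ∀ s, 0 ≤ g s)
    (α : ℝ) (hα0 : 0 ≤ α) (hα1 : α ≤ 1) (hcurv : CurvatureLE g α)
    (hIntu : ∀ S : Finset (Fin n),
      Integrable (fun ω => g (Multiset.map (fun i => X i ω) S.val)) μ)
    (hIntr : ∀ i, Integrable (fun x : Fin (k i) → NNReal => g (List.ofFn x))
      (Measure.pi fun _ => P i)) :
    ∀ i : Fin n,
      (1 - α) * (k i : ℝ) * (∫ ω, g {X i ω} ∂μ) ≤ testScore g P k i :=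
  stmt19_general μ k X hXmeas P hlaw g hg0 hgnn α hα1 hcurv hIntu hIntr
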